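/- arXiv:2507.23503 — 5 statements merged into one kernel-verified Lean document; each statement's English description precedes it below -/
import Mathlib

section
/- Let X be a compact Hausdorff topological space and let T be a set of continuous self-maps of X that is closed under composition. Then the closure E of T in the product space X^X is compact, is closed under composition of functions, and for every g ∈ E the map f ↦ f ∘ g from E to E is continuous. In particular, (E, ∘) is a compact left-topological semigroup (the Ellis semigroup of T). -/
/-- **Ellis semigroup.** If `X` is a compact Hausdorff space and `T` is a set of
continuous self-maps of `X` closed under composition, then the closure `E` of `T`
in the product space `X → X` is compact, closed under composition, and for every
`g ∈ E` the map `f ↦ f ∘ g` is continuous on `E`; i.e. `(E, ∘)` is a compact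
left-topological semigroup. -/
theorem ellis_semigroup_of_closure
    {X : Type*} [TopologicalSpace X] [CompactSpace X] [T2Space X]
    (T : Set (X → X)) (hcont : ∀ f ∈ T, Continuous f)
    (hcomp : ∀ f ∈ T, ∀ g ∈ T, f ∘ g ∈ T) :
    IsCompact (closure T) ∧
    (∀ f ∈ closure T, ∀ g ∈ closure T, f ∘ g ∈ closure T) ∧
    (∀ g ∈ closure T, ContinuousOn (fun f : X → X => f ∘ g) (closure T)) := by
  -- right translation is continuous on all of X → X
  have hR : ∀ g : X → X, Continuous (fun f : X → X => f ∘ g) :=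
    fun g => continuous_pi fun x => continuous_apply (g x)
  refine ⟨isClosed_closure.isCompact, ?_, fun g _ => (hR g).continuousOn⟩
  -- Step 1: f ∈ T, g ∈ closure T implies f ∘ g ∈ closure T
  have step1 : ∀ f ∈ T, ∀ g ∈ closure T, f ∘ g ∈ closure T := by
    intro f hf g hg
    have hL : Continuous (fun g : X → X => f ∘ g) :=
      continuous_pi fun x => (hcont f hf).comp (continuous_apply x)
    have hM : Set.MapsTo (fun g : X → X => f ∘ g) T (closure T) :=
      fun g hg => subset_closure (hcomp f hf g hg)
    have := hM.closure hL hg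
    simpa using this
  -- Step 2: f, g ∈ closure T implies f ∘ g ∈ closure T
  intro f hf g hg
  have hM : Set.MapsTo (fun f : X → X => f ∘ g) T (closure T) :=
    fun f hf => step1 f hf g hg
  have := hM.closure (hR g) hf
  simpa using this
end

section
/- Let S be a nonempty compact Hausdorff space with an associative multiplication such that for every a ∈ S the map s ↦ s·a is continuous. Then: (1) for every a ∈ S, the set S·a is a compact (hence closed) left ideal; (2) every left ideal of S contains a minimal left ideal; (3) every minimal left ideal has the form S·a for some a ∈ S and is therefore closed. -/
/-- A left ideal of a semigroup: a nonempty subset `L` with `S·L ⊆ L`. -/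
def IsLeftIdeal {S : Type*} [Mul S] (L : Set S) : Prop :=
  L.Nonempty ∧ ∀ s : S, ∀ x ∈ L, s * x ∈ L

/-- A minimal left ideal: a left ideal containing no proper left sub-ideal. -/
def IsMinimalLeftIdeal {S : Type*} [Mul S] (L : Set S) : Prop :=
  IsLeftIdeal L ∧ ∀ L' ⊆ L, IsLeftIdeal L' → L' = L

/-- In a nonempty compact Hausdorff left-topological semigroup (all right
translations `s ↦ s * a` continuous, multiplication associative):
(1) every `S·a` is a compact left ideal; (2) every left ideal contains a
minimal left ideal; (3) every minimal left ideal has the form `S·a` and is closed. -/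
theorem compact_left_topological_semigroup_ideals
    {S : Type*} [TopologicalSpace S] [CompactSpace S] [T2Space S] [Nonempty S] [Mul S]
    (hassoc : ∀ a b c : S, a * b * c = a * (b * c))
    (hright : ∀ a : S, Continuous fun s : S => s * a) :
    (∀ a : S, IsCompact (Set.range fun s : S => s * a) ∧
      IsLeftIdeal (Set.range fun s : S => s * a)) ∧
    (∀ L : Set S, IsLeftIdeal L → ∃ L' ⊆ L, IsMinimalLeftIdeal L') ∧
    (∀ L : Set S, IsMinimalLeftIdeal L →
      (∃ a : S, L = Set.range fun s : S => s * a) ∧ IsClosed L) := by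
  -- Basic facts about `S·a`.
  have hcomp : ∀ a : S, IsCompact (Set.range fun s : S => s * a) := fun a =>
    isCompact_range (hright a)
  have hideal : ∀ a : S, IsLeftIdeal (Set.range fun s : S => s * a) := by
    intro a
    refine ⟨Set.range_nonempty _, ?_⟩
    rintro s x ⟨t, rfl⟩
    exact ⟨s * t, (hassoc s t a)⟩
  have hclosed : ∀ a : S, IsClosed (Set.range fun s : S => s * a) := fun a =>
    (hcomp a).isClosed
  -- Part (2): Zorn's lemma on closed left sub-ideals.
  have part2 : ∀ L : Set S, IsLeftIdeal L → ∃ L' ⊆ L, IsMinimalLeftIdeal L' := by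
    intro L hL
    obtain ⟨a, haL⟩ := hL.1
    -- family of closed left ideals contained in L
    set 𝒮 : Set (Set S) := {K | K ⊆ L ∧ IsClosed K ∧ IsLeftIdeal K} with h𝒮
    have hRa : (Set.range fun s : S => s * a) ∈ 𝒮 := by
      refine ⟨?_, hclosed a, hideal a⟩
      rintro x ⟨t, rfl⟩
      exact hL.2 t a haL
    have hchains : ∀ c ⊆ 𝒮, IsChain (· ⊆ ·) c → c.Nonempty →
        ∃ lb ∈ 𝒮, ∀ s ∈ c, lb ⊆ s := by
      intro c hc𝒮 hchain hcne
      refine ⟨⋂₀ c, ⟨?_, ?_, ?_, ?_⟩, fun s hs => Set.sInter_subset_of_mem hs⟩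
      · obtain ⟨K, hK⟩ := hcne
        exact (Set.sInter_subset_of_mem hK).trans (hc𝒮 hK).1
      · exact isClosed_sInter fun K hK => (hc𝒮 hK).2.1
      · -- nonempty intersection of a chain of nonempty compact closed sets
        haveI : Nonempty c := hcne.to_subtype
        have hdir : Directed (· ⊇ ·) (fun K : c => (K : Set S)) := by
          intro K₁ K₂
          rcases hchain.total K₁.2 K₂.2 with h | h
          · exact ⟨K₁, subset_rfl, h⟩
          · exact ⟨K₂, h, subset_rfl⟩
        have := IsCompact.nonempty_iInter_of_directed_nonempty_isCompact_isClosed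
          (fun K : c => (K : Set S)) hdir (fun K => (hc𝒮 K.2).2.2.1)
          (fun K => (hc𝒮 K.2).2.1.isCompact)
          (fun K => (hc𝒮 K.2).2.1)
        rwa [Set.sInter_eq_iInter]
      · intro s x hx
        intro K hK
        exact (hc𝒮 hK).2.2.2 s x (hx K hK)
    obtain ⟨m, -, hm𝒮, hmin⟩ := zorn_superset_nonempty 𝒮 hchains _ hRa
    refine ⟨m, hm𝒮.1, hm𝒮.2.2, ?_⟩
    intro L' hL'm hL'
    obtain ⟨b, hbL'⟩ := hL'.1
    have hRb : (Set.range fun s : S => s * b) ∈ 𝒮 := by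
      refine ⟨?_, hclosed b, hideal b⟩
      rintro x ⟨t, rfl⟩
      exact hm𝒮.1 (hm𝒮.2.2.2 t b (hL'm hbL'))
    have hsub : (Set.range fun s : S => s * b) ⊆ L' := by
      rintro x ⟨t, rfl⟩
      exact hL'.2 t b hbL'
    have hm := hmin hRb (hsub.trans hL'm)
    exact le_antisymm hL'm (hm.trans hsub)
  refine ⟨fun a => ⟨hcomp a, hideal a⟩, part2, ?_⟩
  -- Part (3)
  intro L hL
  obtain ⟨a, haL⟩ := hL.1.1
  have hsub : (Set.range fun s : S => s * a) ⊆ L := by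
    rintro x ⟨t, rfl⟩
    exact hL.1.2 t a haL
  have heq := hL.2 _ hsub (hideal a)
  exact ⟨⟨a, heq.symm⟩, heq ▸ hclosed a⟩
end

section
/- Let S be a semigroup and let I ⊆ S be a two-sided ideal of S which, with the multiplication inherited from S, is a group. Then I is contained in every left ideal and in every right ideal of S; consequently I is the unique minimal left ideal and the unique minimal right ideal of S. -/
/-- A right ideal of a semigroup: a nonempty subset `R` with `R·S ⊆ R`. -/
def IsRightIdeal {S : Type*} [Mul S] (R : Set S) : Prop :=
  R.Nonempty ∧ ∀ s : S, ∀ x ∈ R, x * s ∈ R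

/-- A minimal right ideal. -/
def IsMinimalRightIdeal {S : Type*} [Mul S] (R : Set S) : Prop :=
  IsRightIdeal R ∧ ∀ R' ⊆ R, IsRightIdeal R' → R' = R

/-- If a two-sided ideal `I` of a semigroup `S` is a group under the inherited
multiplication (witnessed by an identity `e ∈ I` and inverses within `I`), then
`I` is contained in every left ideal and every right ideal; consequently `I` is
the unique minimal left ideal and the unique minimal right ideal of `S`. -/
theorem two_sided_ideal_group_is_unique_minimal_ideal
    {S : Type*} [Semigroup S] (I : Set S)
    (hIdeal : ∀ s : S, ∀ x ∈ I, s * x ∈ I ∧ x * s ∈ I)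
    (e : S) (he : e ∈ I)
    (hid : ∀ x ∈ I, e * x = x ∧ x * e = x)
    (hinv : ∀ x ∈ I, ∃ y ∈ I, x * y = e ∧ y * x = e) :
    (∀ L : Set S, IsLeftIdeal L → I ⊆ L) ∧
    (∀ R : Set S, IsRightIdeal R → I ⊆ R) ∧
    (IsMinimalLeftIdeal I ∧ ∀ L : Set S, IsMinimalLeftIdeal L → L = I) ∧
    (IsMinimalRightIdeal I ∧ ∀ R : Set S, IsMinimalRightIdeal R → R = I) := by
  have hL : ∀ L : Set S, IsLeftIdeal L → I ⊆ L := by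
    intro L hLid x hx
    obtain ⟨⟨a, ha⟩, hLmul⟩ := hLid
    have hb : e * a ∈ I := (hIdeal a e he).2
    have hbL : e * a ∈ L := hLmul e a ha
    obtain ⟨c, hc, hbc, hcb⟩ := hinv (e * a) hb
    have : x * c * (e * a) = x := by
      rw [mul_assoc, hcb, (hid x hx).2]
    rw [← this]
    exact hLmul (x * c) (e * a) hbL
  have hR : ∀ R : Set S, IsRightIdeal R → I ⊆ R := by
    intro R hRid x hx
    obtain ⟨⟨a, ha⟩, hRmul⟩ := hRid
    have hb : a * e ∈ I := (hIdeal a e he).1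
    have hbR : a * e ∈ R := hRmul e a ha
    obtain ⟨c, hc, hbc, hcb⟩ := hinv (a * e) hb
    have : a * e * (c * x) = x := by
      rw [← mul_assoc, hbc, (hid x hx).1]
    rw [← this]
    exact hRmul (c * x) (a * e) hbR
  have hIL : IsLeftIdeal I := ⟨⟨e, he⟩, fun s x hx => (hIdeal s x hx).1⟩
  have hIR : IsRightIdeal I := ⟨⟨e, he⟩, fun s x hx => (hIdeal s x hx).2⟩
  refine ⟨hL, hR, ⟨⟨hIL, fun L' hL' h => Set.Subset.antisymm hL' (hL L' h)⟩, ?_⟩,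
    ⟨⟨hIR, fun R' hR' h => Set.Subset.antisymm hR' (hR R' h)⟩, ?_⟩⟩
  · intro L hLmin
    exact (hLmin.2 I (hL L hLmin.1) hIL).symm
  · intro R hRmin
    exact (hRmin.2 I (hR R hRmin.1) hIR).symm
end

section
/- Let G be a compact Hausdorff topological group and μ an idempotent Radon probability measure on G (μ ∗ μ = μ). Then for every g ∈ supp(μ), μ ∗ δ_g = μ and δ_g ∗ μ = μ; that is, μ is invariant under left and right translation by all elements of its support. -/
open MeasureTheory

/-- The support of a measure: points all of whose open neighborhoods have positive
measure. -/
def msupport {X : Type*} [TopologicalSpace X] [MeasurableSpace X] (μ : Measure X) : Set X :=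
  {x | ∀ U : Set X, IsOpen U → x ∈ U → 0 < μ U}

/-- Convolution of measures: the pushforward of the product measure under the
multiplication map. -/
noncomputable def mconv {M : Type*} [Mul M] [MeasurableSpace M]
    (μ ν : Measure M) : Measure M :=
  (μ.prod ν).map fun p : M × M => p.1 * p.2

open Filter Function

/-!
The support `S` of an idempotent probability measure `μ` is closed under multiplication, hence,
`G` being compact, a closed subgroup. For continuous `f`, idempotence and Fubini show that
`φ y = ∫ x, f (x * y) ∂μ` satisfies the mean value property `φ y = ∫ z, φ (z * y) ∂μ`. At a point
`y₀` where `φ` is maximal on `S` this forces `φ (z * y₀) = φ y₀` for every `z ∈ S`, in particular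
for `z = y₀⁻¹`; so `max_S φ = φ 1`, and likewise `min_S φ = φ 1`. Hence
`∫ x, f (x * g) ∂μ = ∫ x, f x ∂μ` for `g ∈ S`, and a regular measure is determined by these
integrals. Left translations are handled symmetrically.
-/

lemma msupport_eq_support {X : Type*} [TopologicalSpace X] [MeasurableSpace X]
    (μ : Measure X) : msupport μ = μ.support := by
  ext x
  rw [Measure.mem_support_iff_forall]
  refine ⟨fun hx U hU => ?_, fun hx U hUo hxU => hx U (hUo.mem_nhds hxU)⟩
  obtain ⟨V, hVU, hVo, hxV⟩ := mem_nhds_iff.1 hU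
  exact (hx V hVo hxV).trans_le (measure_mono hVU)

theorem IsClosed.inv_mem_of_forall_mul_mem {G : Type*} [Group G] [TopologicalSpace G]
    [IsTopologicalGroup G] [CompactSpace G] {S : Set G} (hS : IsClosed S)
    (hmul : ∀ a ∈ S, ∀ b ∈ S, a * b ∈ S) {a : G} (ha : a ∈ S) : a⁻¹ ∈ S := by
  have hpow : ∀ n ≥ 1, a ^ n ∈ S := by
    refine fun n hn => Nat.le_induction (by simpa using ha) (fun k _ hk => ?_) n hn
    rw [pow_succ]
    exact hmul _ hk _ ha
  -- `a⁻¹ = a ^ (-1)` is a cluster point of the positive powers of `a`.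
  exact hS.mem_of_mapClusterPt (by simpa using mapClusterPt_self_zpow_atTop_pow a (-1))
    (eventually_atTop.2 ⟨1, hpow⟩)

lemma continuous_integral_of_continuous_uncurry {X Y : Type*} [TopologicalSpace X]
    [TopologicalSpace Y] [CompactSpace Y] [MeasurableSpace Y] [OpensMeasurableSpace Y]
    (μ : Measure Y) [IsFiniteMeasure μ] {f : X → Y → ℝ} (hf : Continuous (uncurry f)) :
    Continuous fun x => ∫ y, f x y ∂μ :=
  continuousOn_univ.1 <| continuousOn_integral_of_compact_support isCompact_univ
    hf.continuousOn (by simp)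

lemma eq_of_mem_support_of_ae_le_of_integral_eq {X : Type*} [TopologicalSpace X]
    [MeasurableSpace X] [OpensMeasurableSpace X] {μ : Measure X} [IsProbabilityMeasure μ]
    {u : X → ℝ} (hu : Continuous u) (hint : Integrable u μ) {c : ℝ}
    (hle : ∀ᵐ x ∂μ, u x ≤ c) (hc : ∫ x, u x ∂μ = c) : ∀ x ∈ μ.support, u x = c := by
  have hae : u =ᵐ[μ] fun _ => c :=
    (integral_eq_iff_of_ae_le hint (integrable_const c) hle).1 (by simpa using hc)
  intro x hx
  by_contra hne
  have hnull : μ {y | u y ≠ c} = 0 := hae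
  exact Measure.subset_compl_support_of_isOpen (isOpen_ne_fun hu continuous_const) hnull hne hx

/-- Maximum principle for functions harmonic for the random walk `y ↦ T z y`, `z ∼ μ`, which stays
in `supp μ` and reaches `e` from every point of it. -/
theorem le_of_forall_eq_integral_comp {X : Type*} [TopologicalSpace X] [CompactSpace X]
    [MeasurableSpace X] [OpensMeasurableSpace X] {μ : Measure X} [IsProbabilityMeasure μ]
    (hsupp : ∀ᵐ z ∂μ, z ∈ μ.support) {T : X → X → X} (hT : ∀ y, Continuous (T · y))
    (hTS : ∀ z ∈ μ.support, ∀ y ∈ μ.support, T z y ∈ μ.support)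
    {e : X} (he : ∀ y ∈ μ.support, ∃ z ∈ μ.support, T z y = e)
    {φ : X → ℝ} (hφ : Continuous φ) (hmean : ∀ y, φ y = ∫ z, φ (T z y) ∂μ) :
    ∀ y ∈ μ.support, φ y ≤ φ e := by
  obtain ⟨y₀, hy₀, hmax⟩ :=
    Measure.isClosed_support.isCompact.exists_isMaxOn hsupp.exists hφ.continuousOn
  have hconst : ∀ z ∈ μ.support, φ (T z y₀) = φ y₀ :=
    eq_of_mem_support_of_ae_le_of_integral_eq (hφ.comp (hT y₀))
      ((hφ.comp (hT y₀)).integrable_of_hasCompactSupport (HasCompactSupport.of_compactSpace _))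
      (hsupp.mono fun z hz => hmax (hTS z hz y₀ hy₀)) (hmean y₀).symm
  obtain ⟨z, hz, rfl⟩ := he y₀ hy₀
  intro y hy
  rw [hconst z hz]
  exact hmax hy

theorem eq_of_forall_eq_integral_comp {X : Type*} [TopologicalSpace X] [CompactSpace X]
    [MeasurableSpace X] [OpensMeasurableSpace X] {μ : Measure X} [IsProbabilityMeasure μ]
    (hsupp : ∀ᵐ z ∂μ, z ∈ μ.support) {T : X → X → X} (hT : ∀ y, Continuous (T · y))
    (hTS : ∀ z ∈ μ.support, ∀ y ∈ μ.support, T z y ∈ μ.support)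
    {e : X} (he : ∀ y ∈ μ.support, ∃ z ∈ μ.support, T z y = e)
    {φ : X → ℝ} (hφ : Continuous φ) (hmean : ∀ y, φ y = ∫ z, φ (T z y) ∂μ) :
    ∀ y ∈ μ.support, φ y = φ e := by
  have hmean_neg (y : X) : -φ y = ∫ z, -φ (T z y) ∂μ := by rw [integral_neg, ← hmean y]
  intro y hy
  exact le_antisymm (le_of_forall_eq_integral_comp hsupp hT hTS he hφ hmean y hy)
    (neg_le_neg_iff.1 (le_of_forall_eq_integral_comp hsupp hT hTS he hφ.neg hmean_neg y hy))

lemma mconv_dirac_eq_map {M : Type*} [Mul M] [MeasurableSpace M] [MeasurableMul M]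
    [MeasurableSingletonClass M] (μ : Measure M) [SFinite μ] (g : M) :
    mconv μ (Measure.dirac g) = μ.map (· * g) := by
  rw [mconv, Measure.prod_dirac,
    AEMeasurable.map_map_of_aemeasurable _ measurable_prodMk_right.aemeasurable]
  · rfl
  · exact (measurableEmbedding_prod_mk_right g).aemeasurable_map_iff.2
      (measurable_mul_const g).aemeasurable

lemma dirac_mconv_eq_map {M : Type*} [Mul M] [MeasurableSpace M] [MeasurableMul M]
    [MeasurableSingletonClass M] (μ : Measure M) [SFinite μ] (g : M) :
    mconv (Measure.dirac g) μ = μ.map (g * ·) := by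
  rw [mconv, Measure.dirac_prod,
    AEMeasurable.map_map_of_aemeasurable _ measurable_prodMk_left.aemeasurable]
  · rfl
  · exact (measurableEmbedding_prodMk_left g).aemeasurable_map_iff.2
      (measurable_const_mul g).aemeasurable

section Convolution

variable {G : Type*} [Mul G] [MeasurableSpace G] {μ ν : Measure G}

/- `Measure.map` of a map that is not a.e.-measurable is `0`, and multiplication need not be
measurable for the product σ-algebra unless `G` is second countable. -/
lemma aemeasurable_mul_of_mconv_ne_zero (h : mconv μ ν ≠ 0) :
    AEMeasurable (fun p : G × G => p.1 * p.2) (μ.prod ν) := by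
  by_contra hm
  exact h (Measure.map_of_not_aemeasurable hm)

lemma mconv_self_ne_zero [IsProbabilityMeasure μ] (hidem : mconv μ μ = μ) : mconv μ μ ≠ 0 := by
  rw [hidem]
  exact IsProbabilityMeasure.ne_zero μ

variable [TopologicalSpace G]

lemma mul_mem_support_mconv [ContinuousMul G] [SFinite μ] [SFinite ν] (h : mconv μ ν ≠ 0)
    {a b : G} (ha : a ∈ μ.support) (hb : b ∈ ν.support) : a * b ∈ (mconv μ ν).support := by
  rw [Measure.mem_support_iff_forall] at ha hb ⊢
  intro U hU
  obtain ⟨V, hV, W, hW, hVW⟩ :=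
    mem_nhds_prod_iff.1 (continuous_mul.continuousAt.preimage_mem_nhds hU)
  calc 0 < μ V * ν W := ENNReal.mul_pos (ha V hV).ne' (hb W hW).ne'
    _ = μ.prod ν (V ×ˢ W) := (Measure.prod_prod V W).symm
    _ ≤ μ.prod ν ((fun p : G × G => p.1 * p.2) ⁻¹' U) := measure_mono hVW
    _ ≤ mconv μ ν U := Measure.le_map_apply (aemeasurable_mul_of_mconv_ne_zero h) U

lemma mul_mem_support_of_mconv_self [ContinuousMul G] [IsProbabilityMeasure μ]
    (hidem : mconv μ μ = μ) {a b : G} (ha : a ∈ μ.support) (hb : b ∈ μ.support) :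
    a * b ∈ μ.support := by
  have h := mul_mem_support_mconv (mconv_self_ne_zero hidem) ha hb
  rwa [hidem] at h

variable [CompactSpace G] [OpensMeasurableSpace G] [IsFiniteMeasure μ] [IsFiniteMeasure ν]

lemma integrable_comp_mul_prod (h : mconv μ ν ≠ 0) {f : G → ℝ} (hf : Continuous f) :
    Integrable (fun p : G × G => f (p.1 * p.2)) (μ.prod ν) := by
  have : IsFiniteMeasure (mconv μ ν) := by unfold mconv; infer_instance
  exact (integrable_map_measure hf.aestronglyMeasurable (aemeasurable_mul_of_mconv_ne_zero h)).1
    (hf.integrable_of_hasCompactSupport (HasCompactSupport.of_compactSpace f))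

lemma integral_mconv_eq_integral_integral (h : mconv μ ν ≠ 0) {f : G → ℝ} (hf : Continuous f) :
    ∫ z, f z ∂(mconv μ ν) = ∫ x, ∫ y, f (x * y) ∂ν ∂μ :=
  (integral_map (aemeasurable_mul_of_mconv_ne_zero h) hf.aestronglyMeasurable).trans
    (integral_prod _ (integrable_comp_mul_prod h hf))

lemma integral_mconv_eq_integral_integral_swap (h : mconv μ ν ≠ 0) {f : G → ℝ}
    (hf : Continuous f) : ∫ z, f z ∂(mconv μ ν) = ∫ y, ∫ x, f (x * y) ∂μ ∂ν :=
  (integral_map (aemeasurable_mul_of_mconv_ne_zero h) hf.aestronglyMeasurable).trans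
    (integral_prod_symm _ (integrable_comp_mul_prod h hf))

end Convolution

section IdempotentSemigroup

variable {G : Type*} [Semigroup G] [TopologicalSpace G] [ContinuousMul G] [CompactSpace G]
  [MeasurableSpace G] [OpensMeasurableSpace G] {μ : Measure G} [IsProbabilityMeasure μ]

lemma integral_comp_mul_right_eq_integral_integral (hidem : mconv μ μ = μ) {f : G → ℝ}
    (hf : Continuous f) (y : G) :
    ∫ x, f (x * y) ∂μ = ∫ z, ∫ x, f (x * (z * y)) ∂μ ∂μ := by
  conv_lhs => rw [← hidem]
  rw [integral_mconv_eq_integral_integral_swap (mconv_self_ne_zero hidem)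
    (f := fun x => f (x * y)) (by fun_prop)]
  simp only [mul_assoc]

lemma integral_comp_mul_left_eq_integral_integral (hidem : mconv μ μ = μ) {f : G → ℝ}
    (hf : Continuous f) (y : G) :
    ∫ x, f (y * x) ∂μ = ∫ z, ∫ x, f (y * z * x) ∂μ ∂μ := by
  conv_lhs => rw [← hidem]
  rw [integral_mconv_eq_integral_integral (mconv_self_ne_zero hidem)
    (f := fun x => f (y * x)) (by fun_prop)]
  simp only [mul_assoc]

end IdempotentSemigroup

section IdempotentGroup

variable {G : Type*} [Group G] [TopologicalSpace G] [IsTopologicalGroup G] [CompactSpace G]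
  [MeasurableSpace G] {μ : Measure G} [IsProbabilityMeasure μ]

lemma inv_mem_support_of_mconv_self (hidem : mconv μ μ = μ) {a : G} (ha : a ∈ μ.support) :
    a⁻¹ ∈ μ.support :=
  Measure.isClosed_support.inv_mem_of_forall_mul_mem
    (fun _ ha _ hb => mul_mem_support_of_mconv_self hidem ha hb) ha

variable [OpensMeasurableSpace G]

lemma integral_comp_mul_right_of_mconv_self (hsupp : ∀ᵐ z ∂μ, z ∈ μ.support)
    (hidem : mconv μ μ = μ) {g : G} (hg : g ∈ μ.support) {f : G → ℝ} (hf : Continuous f) :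
    ∫ x, f (x * g) ∂μ = ∫ x, f x ∂μ := by
  simpa using eq_of_forall_eq_integral_comp hsupp (T := fun z y => z * y)
    continuous_mul_const (fun _ hz _ hy => mul_mem_support_of_mconv_self hidem hz hy)
    (fun y hy => ⟨y⁻¹, inv_mem_support_of_mconv_self hidem hy, inv_mul_cancel y⟩)
    (continuous_integral_of_continuous_uncurry μ (f := fun y x => f (x * y)) (by fun_prop))
    (integral_comp_mul_right_eq_integral_integral hidem hf) g hg

lemma integral_comp_mul_left_of_mconv_self (hsupp : ∀ᵐ z ∂μ, z ∈ μ.support)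
    (hidem : mconv μ μ = μ) {g : G} (hg : g ∈ μ.support) {f : G → ℝ} (hf : Continuous f) :
    ∫ x, f (g * x) ∂μ = ∫ x, f x ∂μ := by
  simpa using eq_of_forall_eq_integral_comp hsupp (T := fun z y => y * z)
    continuous_const_mul (fun _ hz _ hy => mul_mem_support_of_mconv_self hidem hy hz)
    (fun y hy => ⟨y⁻¹, inv_mem_support_of_mconv_self hidem hy, mul_inv_cancel y⟩)
    (continuous_integral_of_continuous_uncurry μ (f := fun y x => f (y * x)) (by fun_prop))
    (integral_comp_mul_left_eq_integral_integral hidem hf) g hg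

end IdempotentGroup

section Invariance

variable {G : Type*} [Group G] [TopologicalSpace G] [IsTopologicalGroup G] [CompactSpace G]
  [T2Space G] [MeasurableSpace G] [BorelSpace G] {μ : Measure G} [IsProbabilityMeasure μ]
  [μ.Regular]

lemma map_mul_right_eq_self_of_mconv_self (hidem : mconv μ μ = μ) {g : G}
    (hg : g ∈ μ.support) : μ.map (· * g) = μ := by
  have : (μ.map (· * g)).Regular := Measure.Regular.map (Homeomorph.mulRight g)
  refine Measure.ext_of_integral_eq_on_compactlySupported fun f => ?_
  rw [integral_map (measurable_mul_const g).aemeasurable (map_continuous f).aestronglyMeasurable]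
  exact integral_comp_mul_right_of_mconv_self Measure.support_mem_ae_of_regular hidem hg
    (map_continuous f)

lemma map_mul_left_eq_self_of_mconv_self (hidem : mconv μ μ = μ) {g : G}
    (hg : g ∈ μ.support) : μ.map (g * ·) = μ := by
  have : (μ.map (g * ·)).Regular := Measure.Regular.map (Homeomorph.mulLeft g)
  refine Measure.ext_of_integral_eq_on_compactlySupported fun f => ?_
  rw [integral_map (measurable_const_mul g).aemeasurable (map_continuous f).aestronglyMeasurable]
  exact integral_comp_mul_left_of_mconv_self Measure.support_mem_ae_of_regular hidem hg
    (map_continuous f)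

end Invariance

/-- Let `G` be a compact Hausdorff topological group and `μ` an idempotent Radon
probability measure (`μ ∗ μ = μ`). Then for every `g` in the support of `μ` one has
`μ ∗ δ_g = μ` and `δ_g ∗ μ = μ`: `μ` is invariant under left and right translation
by all elements of its support. -/
theorem idempotent_invariant_under_support_translations
    {G : Type*} [Group G] [TopologicalSpace G] [IsTopologicalGroup G]
    [CompactSpace G] [T2Space G] [MeasurableSpace G] [BorelSpace G]
    (μ : Measure G) [IsProbabilityMeasure μ] [μ.Regular]
    (hidem : mconv μ μ = μ) :
    ∀ g ∈ msupport μ,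
      mconv μ (Measure.dirac g) = μ ∧ mconv (Measure.dirac g) μ = μ := by
  intro g hg
  rw [msupport_eq_support] at hg
  exact ⟨(mconv_dirac_eq_map μ g).trans (map_mul_right_eq_self_of_mconv_self hidem hg),
    (dirac_mconv_eq_map μ g).trans (map_mul_left_eq_self_of_mconv_self hidem hg)⟩
end

section
/- (Ellis theorem) Let G be a group carrying a compact Hausdorff topology such that multiplication is separately continuous (for each a ∈ G, both x ↦ a·x and x ↦ x·a are continuous). Then G is a topological group: multiplication is jointly continuous and inversion is continuous. -/
/-!
Namioka's argument. For a continuous `f : G → ℝ` the translates `y ↦ f (x * y)` form a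
pointwise compact set `K` of continuous functions on the compact space `G`. Such a set always
has nonempty relatively open pieces of small sup-diameter. When the index space is compact
metric this is Baire category applied to the sets of members of `K` with a fixed modulus of
uniform continuity. In general, if the claim failed for some `ε`, a countable set `D ⊆ G`
closed under choosing witnesses of diameter `> ε` for rational boxes would reduce the problem to
the compact metrizable set `K|_D`, where the previous case applies.

Hence `x ↦ f (x * ·)` is continuous into the sup metric, `f ∘ (· * ·)` is jointly continuous
for every `f`, and multiplication is continuous because `G` is completely regular. Inversion
then has the closed graph `{(x, y) | x * y = 1}` in a compact space.
-/

open Set Filter Topology TopologicalSpace Function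

section Namioka

variable {X Y : Type*} [TopologicalSpace X]

theorem exists_isOpen_forall_dist_lt_imp_dist_le [BaireSpace X] [Nonempty X]
    [PseudoMetricSpace Y] [CompactSpace Y] {E : X → Y → ℝ} (hE : ∀ x, Continuous (E x))
    (hE' : ∀ y, Continuous fun x => E x y) {ε : ℝ} (hε : 0 < ε) :
    ∃ δ > 0, ∃ V : Set X, IsOpen V ∧ V.Nonempty ∧
      ∀ x ∈ V, ∀ y y', dist y y' < δ → dist (E x y) (E x y') ≤ ε := by
  set C : ℕ → Set X := fun n =>
    {x | ∀ y y', dist y y' < 1 / (n + 1) → dist (E x y) (E x y') ≤ ε}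
  have hC : ∀ n, IsClosed (C n) := fun n => by
    simp only [C, ofPred_forall]
    exact isClosed_iInter fun y => isClosed_iInter fun y' => isClosed_iInter fun _ =>
      isClosed_le ((hE' y).dist (hE' y')) continuous_const
  have hcover : ⋃ n, C n = univ := by
    refine eq_univ_of_forall fun x => mem_iUnion.2 ?_
    obtain ⟨δ, hδ, hδE⟩ := Metric.uniformContinuous_iff.1
      (CompactSpace.uniformContinuous_of_continuous (hE x)) ε hε
    obtain ⟨n, hn⟩ := exists_nat_one_div_lt hδ
    exact ⟨n, fun y y' hyy' => (hδE (hyy'.trans hn)).le⟩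
  obtain ⟨n, hn⟩ := nonempty_interior_of_iUnion_of_closed hC hcover
  exact ⟨1 / (n + 1), by positivity, _, isOpen_interior, hn, fun x hx => interior_subset hx⟩

theorem exists_isOpen_forall_dist_le_of_pseudoMetricSpace [BaireSpace X] [Nonempty X]
    [PseudoMetricSpace Y] [CompactSpace Y] {E : X → Y → ℝ} (hE : ∀ x, Continuous (E x))
    (hE' : ∀ y, Continuous fun x => E x y) {ε : ℝ} (hε : 0 < ε) :
    ∃ U : Set X, IsOpen U ∧ U.Nonempty ∧ ∀ x ∈ U, ∀ x' ∈ U, ∀ y, dist (E x y) (E x' y) ≤ ε := by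
  obtain ⟨δ, hδ, V, hV, ⟨x₀, hx₀⟩, hVδ⟩ :=
    exists_isOpen_forall_dist_lt_imp_dist_le hE hE' (by positivity : 0 < ε / 4)
  obtain ⟨T, -, hT, hTcover⟩ := finite_cover_balls_of_compact (isCompact_univ (X := Y)) hδ
  refine ⟨V ∩ ⋂ t ∈ T, {x | dist (E x t) (E x₀ t) < ε / 4}, ?_, ⟨x₀, hx₀, ?_⟩, ?_⟩
  · exact hV.inter (hT.isOpen_biInter fun t _ =>
      isOpen_lt ((hE' t).dist continuous_const) continuous_const)
  · simpa using fun _ _ => by positivity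
  · rintro x ⟨hxV, hxT⟩ x' ⟨hx'V, hx'T⟩ y
    simp only [mem_iInter, mem_ofPred_eq] at hxT hx'T
    obtain ⟨t, ht, hyt⟩ := mem_iUnion₂.1 (hTcover (mem_univ y))
    calc dist (E x y) (E x' y)
        ≤ dist (E x y) (E x t) + dist (E x t) (E x₀ t) + dist (E x₀ t) (E x' t)
          + dist (E x' t) (E x' y) := by
          linarith [dist_triangle4 (E x y) (E x t) (E x₀ t) (E x' t),
            dist_triangle (E x y) (E x' t) (E x' y)]
      _ ≤ ε / 4 + ε / 4 + ε / 4 + ε / 4 := by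
        gcongr
        · exact hVδ x hxV y t hyt
        · exact (hxT t ht).le
        · exact (dist_comm (E x₀ t) _ ▸ hx'T t ht).le
        · exact hVδ x' hx'V t y (dist_comm y t ▸ hyt)
      _ = ε := by ring

theorem metrizableSpace_of_isCompact_of_forall_continuous [SeparableSpace X]
    {K : Set (X → ℝ)} (hK : IsCompact K) (hKc : ∀ g ∈ K, Continuous g) :
    MetrizableSpace K := by
  obtain ⟨s, hs, hsd⟩ := exists_countable_dense X
  have := hs.to_subtype
  have := isCompact_iff_compactSpace.mp hK
  let ι : K → s → ℝ := fun g x => g.1 x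
  have hι : Continuous ι :=
    continuous_pi fun x => (continuous_apply x.1).comp continuous_subtype_val
  have hinj : Injective ι := fun g h hgh => Subtype.ext <|
    Continuous.ext_on hsd (hKc g g.2) (hKc h h.2) fun x hx => congrFun hgh ⟨x, hx⟩
  exact (hι.isClosedEmbedding hinj).isEmbedding.metrizableSpace

theorem exists_isOpen_forall_dist_le [BaireSpace X] [SeparableSpace X] [Nonempty X]
    [TopologicalSpace Y] [CompactSpace Y] {E : X → Y → ℝ} (hE : ∀ x, Continuous (E x))
    (hE' : ∀ y, Continuous fun x => E x y) {ε : ℝ} (hε : 0 < ε) :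
    ∃ U : Set X, IsOpen U ∧ U.Nonempty ∧ ∀ x ∈ U, ∀ x' ∈ U, ∀ y, dist (E x y) (E x' y) ≤ ε := by
  set Ŷ : Set (X → ℝ) := range fun y x => E x y
  have hŶ : IsCompact Ŷ := isCompact_range (continuous_pi hE)
  have := isCompact_iff_compactSpace.mp hŶ
  have := metrizableSpace_of_isCompact_of_forall_continuous hŶ (by rintro _ ⟨y, rfl⟩; exact hE' y)
  let := metrizableSpaceMetric Ŷ
  obtain ⟨U, hU, hUne, hUε⟩ := exists_isOpen_forall_dist_le_of_pseudoMetricSpace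
    (E := fun x (φ : Ŷ) => φ.1 x) (fun x => (continuous_apply x).comp continuous_subtype_val)
    (by rintro ⟨_, y, rfl⟩; exact hE' y) hε
  exact ⟨U, hU, hUne, fun x hx x' hx' y => hUε x hx x' hx' ⟨_, y, rfl⟩⟩

end Namioka

section CountableSaturation

variable {Y α : Type*}

def saturationStage (w : Finset (Y × α) → Y) : ℕ → Set Y
  | 0 => ∅
  | n + 1 => saturationStage w n ∪ w '' {β | (β : Set (Y × α)) ⊆ saturationStage w n ×ˢ univ}

theorem exists_countable_forall_subset_prod_univ_imp_mem [Countable α] (w : Finset (Y × α) → Y) :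
    ∃ D : Set Y, D.Countable ∧ ∀ β : Finset (Y × α), (β : Set (Y × α)) ⊆ D ×ˢ univ → w β ∈ D := by
  have hmono : Monotone fun n => saturationStage w n ×ˢ (univ : Set α) :=
    monotone_nat_of_le_succ fun n => prod_mono subset_union_left le_rfl
  have hcount : ∀ n, (saturationStage w n).Countable := by
    intro n
    induction n with
    | zero => exact countable_empty
    | succ n ih =>
      have : {β : Finset (Y × α) | (β : Set (Y × α)) ⊆ saturationStage w n ×ˢ univ}.Countable :=
        Countable.mono (fun β hβ => by exact ⟨β.finite_toSet, hβ⟩)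
          ((countable_ofPred_finite_subset (ih.prod countable_univ)).preimage
            Finset.coe_injective)
      exact ih.union (this.image w)
  refine ⟨⋃ n, saturationStage w n, countable_iUnion hcount, fun β hβ => ?_⟩
  rw [iUnion_prod_const] at hβ
  obtain ⟨n, hn⟩ := hmono.directed_le.exists_mem_subset_of_finset_subset_biUnion hβ
  exact mem_iUnion.2 ⟨n + 1, Or.inr ⟨β, hn, rfl⟩⟩

end CountableSaturation

section RatBox

variable {ι κ : Type*}

def ratBox (β : Finset (ι × ℚ × ℚ)) : Set (ι → ℝ) :=
  {v | ∀ p ∈ β, v p.1 ∈ Ioo (p.2.1 : ℝ) p.2.2}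

theorem isOpen_ratBox (β : Finset (ι × ℚ × ℚ)) : IsOpen (ratBox β) := by
  simp only [ratBox, ofPred_forall]
  exact isOpen_biInter_finset fun p _ => isOpen_Ioo.preimage (continuous_apply p.1)

theorem ratBox_map (f : ι ↪ κ) (β : Finset (ι × ℚ × ℚ)) :
    ratBox (β.map (f.prodMap (Embedding.refl _))) = (· ∘ f) ⁻¹' ratBox β := by
  ext v
  simp only [ratBox, mem_ofPred_eq, mem_preimage, Finset.forall_mem_map]
  rfl

theorem exists_ratBox_subset {O : Set (ι → ℝ)} (hO : IsOpen O) {v : ι → ℝ} (hv : v ∈ O) :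
    ∃ β, v ∈ ratBox β ∧ ratBox β ⊆ O := by
  obtain ⟨I, u, hu, hIu⟩ := isOpen_pi_iff.1 hO v hv
  have hq : ∀ i, ∃ q : ℚ × ℚ, i ∈ I → v i ∈ Ioo (q.1 : ℝ) q.2 ∧ Ioo (q.1 : ℝ) q.2 ⊆ u i := by
    intro i
    by_cases hi : i ∈ I
    · obtain ⟨_, hmem, hvi, hsub⟩ :=
        Real.isTopologicalBasis_Ioo_rat.exists_subset_of_mem_open (hu i hi).2 (hu i hi).1
      simp only [mem_iUnion, mem_singleton_iff] at hmem
      obtain ⟨a, b, -, rfl⟩ := hmem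
      exact ⟨(a, b), fun _ => ⟨hvi, hsub⟩⟩
    · exact ⟨0, fun h => absurd h hi⟩
  choose q hq using hq
  refine ⟨I.map ⟨fun i => (i, q i), fun i j h => congrArg Prod.fst h⟩, ?_, fun w hw => hIu ?_⟩
  · simp only [ratBox, mem_ofPred_eq, Finset.forall_mem_map]
    exact fun i hi => (hq i hi).1
  · simp only [ratBox, mem_ofPred_eq, Finset.forall_mem_map] at hw
    exact fun i hi => (hq i hi).2 (hw i hi)

end RatBox

section Fragmentability

variable {Y : Type*} [TopologicalSpace Y] [CompactSpace Y] {K : Set (Y → ℝ)}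

theorem exists_isOpen_domRestrict_forall_dist_le (hK : IsCompact K)
    (hKc : ∀ g ∈ K, Continuous g) (hne : K.Nonempty) {D : Set Y} (hD : D.Countable) {ε : ℝ}
    (hε : 0 < ε) :
    ∃ O : Set (D → ℝ), IsOpen O ∧ (∃ g ∈ K, D.domRestrict g ∈ O) ∧
      ∀ g ∈ K, ∀ h ∈ K, D.domRestrict g ∈ O → D.domRestrict h ∈ O →
        ∀ y ∈ closure D, dist (g y) (h y) ≤ ε := by
  have := hD.to_subtype
  have hρ : Continuous (D.domRestrict : (Y → ℝ) → D → ℝ) := Pi.continuous_domRestrict D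
  set KD := D.domRestrict '' K
  have := isCompact_iff_compactSpace.mp (hK.image hρ)
  have := (hne.image D.domRestrict).to_subtype
  have := isCompact_iff_compactSpace.mp (isClosed_closure (s := D)).isCompact
  have := isCompact_iff_compactSpace.mp hK
  set q : K → KD := imageFactorization D.domRestrict K
  have hqc : Continuous q := (hρ.comp continuous_subtype_val).subtype_mk _
  have hq : IsQuotientMap q := hqc.isClosedMap.isQuotientMap hqc imageFactorization_surjective
  set s := surjInv (imageFactorization_surjective (f := D.domRestrict) (s := K))
  -- members of `K` are continuous, so agreeing on `D` they agree on `closure D`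
  have hsq : ∀ g : K, ∀ z ∈ closure D, (s (q g)).1 z = g.1 z := fun g => by
    have hρg : D.domRestrict (s (q g)).1 = D.domRestrict g.1 :=
      congrArg Subtype.val (surjInv_eq imageFactorization_surjective (q g))
    exact EqOn.closure (fun y hy => congrFun hρg ⟨y, hy⟩) (hKc _ (s (q g)).2) (hKc _ g.2)
  set E : KD → closure D → ℝ := fun u z => (s u).1 z
  have hE : ∀ u, Continuous (E u) := fun u => (hKc _ (s u).2).comp continuous_subtype_val
  have hE' : ∀ z, Continuous fun u => E u z := fun z => hq.continuous_iff.2 <| by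
    simpa only [comp_def, E, hsq _ z z.2] using
      (continuous_apply z.1).comp (continuous_subtype_val (p := (· ∈ K)))
  obtain ⟨U, hU, ⟨u₀, hu₀⟩, hUε⟩ := exists_isOpen_forall_dist_le hE hE' hε
  obtain ⟨O, hO, rfl⟩ := isOpen_induced_iff.1 hU
  obtain ⟨g₀, hg₀, hg₀u⟩ := u₀.2
  refine ⟨O, hO, ⟨g₀, hg₀, hg₀u ▸ hu₀⟩, fun g hg h hh hgO hhO y hy => ?_⟩
  simpa only [E, hsq _ y hy] using hUε (q ⟨g, hg⟩) hgO (q ⟨h, hh⟩) hhO ⟨y, hy⟩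

theorem exists_isOpen_inter_forall_dist_le (hK : IsCompact K) (hKc : ∀ g ∈ K, Continuous g)
    (hne : K.Nonempty) {ε : ℝ} (hε : 0 < ε) :
    ∃ A : Set (Y → ℝ), IsOpen A ∧ (A ∩ K).Nonempty ∧
      ∀ g ∈ A ∩ K, ∀ h ∈ A ∩ K, ∀ y, dist (g y) (h y) ≤ ε := by
  by_contra! hsplit
  obtain ⟨-, -, -, -, y₀, -⟩ := hsplit univ isOpen_univ (by simpa using hne)
  have hw : ∀ β : Finset (Y × ℚ × ℚ), ∃ y, (ratBox β ∩ K).Nonempty →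
      ∃ g ∈ ratBox β ∩ K, ∃ h ∈ ratBox β ∩ K, ε < dist (g y) (h y) := by
    intro β
    by_cases hβ : (ratBox β ∩ K).Nonempty
    · obtain ⟨g, hg, h, hh, y, hy⟩ := hsplit _ (isOpen_ratBox β) hβ
      exact ⟨y, fun _ => ⟨g, hg, h, hh, hy⟩⟩
    · exact ⟨y₀, fun h => absurd h hβ⟩
  choose w hw using hw
  obtain ⟨D, hD, hDw⟩ := exists_countable_forall_subset_prod_univ_imp_mem w
  obtain ⟨O, hO, ⟨g₀, hg₀, hg₀O⟩, hOε⟩ :=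
    exists_isOpen_domRestrict_forall_dist_le hK hKc hne hD hε
  obtain ⟨β₀, hg₀β₀, hβ₀O⟩ := exists_ratBox_subset hO hg₀O
  set β := β₀.map ((Embedding.subtype (· ∈ D)).prodMap (Embedding.refl _))
  have hβ : ∀ g, g ∈ ratBox β ↔ D.domRestrict g ∈ ratBox β₀ := fun g => by
    rw [ratBox_map]; rfl
  have hβD : (β : Set (Y × ℚ × ℚ)) ⊆ D ×ˢ univ := fun p hp => by
    obtain ⟨⟨y, r⟩, -, rfl⟩ := Finset.mem_map.1 hp
    exact ⟨y.2, mem_univ r⟩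
  obtain ⟨g, ⟨hgβ, hg⟩, h, ⟨hhβ, hh⟩, hgh⟩ := hw β ⟨g₀, (hβ g₀).2 hg₀β₀, hg₀⟩
  exact hgh.not_ge (hOε g hg h hh (hβ₀O ((hβ g).1 hgβ)) (hβ₀O ((hβ h).1 hhβ)) _
    (subset_closure (hDw β hβD)))

end Fragmentability

theorem continuous_uncurry_of_tendstoUniformly {X Y Z : Type*} [TopologicalSpace X]
    [TopologicalSpace Y] [UniformSpace Z] {F : X → Y → Z} (hF : ∀ x, Continuous (F x))
    (h : ∀ x, TendstoUniformly F (F x) (𝓝 x)) : Continuous (uncurry F) := by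
  refine continuous_iff_continuousAt.2 fun ⟨a, b⟩ => ?_
  have ha : TendstoUniformly (fun p : X × Y => F p.1) (F a) (𝓝 (a, b)) :=
    tendstoUniformly_iff_tendsto.2 <| (tendstoUniformly_iff_tendsto.1 (h a)).comp
      ((continuous_fst.tendsto (a, b)).prodMap tendsto_id)
  exact ha.tendsto_comp (hF a).continuousAt continuousAt_snd

theorem continuous_of_forall_continuous_comp {X Y : Type*} [TopologicalSpace X]
    [TopologicalSpace Y] [CompletelyRegularSpace Y] {φ : X → Y}
    (h : ∀ f : Y → ℝ, Continuous f → Continuous (f ∘ φ)) : Continuous φ := by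
  refine continuous_def.2 fun W hW => isOpen_iff_forall_mem_open.2 fun x hx => ?_
  obtain ⟨f, hf, hfx, hfW⟩ := CompletelyRegularSpace.completely_regular_isOpen (φ x) W hW hx
  refine ⟨{x' | (f (φ x') : ℝ) < 1}, fun x' hx' => ?_,
    isOpen_lt (h _ (continuous_subtype_val.comp hf)) continuous_const, by simp [hfx]⟩
  by_contra hW'
  simp [hfW hW'] at hx'

theorem continuous_of_isClosed_graph {X Y : Type*} [TopologicalSpace X] [TopologicalSpace Y]
    [CompactSpace Y] {f : X → Y} (hf : IsClosed {p : X × Y | f p.1 = p.2}) : Continuous f := by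
  refine continuous_iff_isClosed.2 fun C hC => ?_
  convert isClosedMap_fst_of_compactSpace _ (hf.inter (isClosed_univ.prod hC))
  ext x
  simp

theorem tendstoUniformly_comp_mul_nhds {G : Type*} [Group G] [TopologicalSpace G]
    [CompactSpace G] (hleft : ∀ a : G, Continuous fun x : G => a * x)
    (hright : ∀ a : G, Continuous fun x : G => x * a) {f : G → ℝ} (hf : Continuous f) (a : G) :
    TendstoUniformly (fun x y => f (x * y)) (fun y => f (a * y)) (𝓝 a) := by
  set Φ : G → G → ℝ := fun x y => f (x * y)
  have hΦ : Continuous Φ := continuous_pi fun y => hf.comp (hright y)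
  rw [Metric.tendstoUniformly_iff]
  intro ε hε
  obtain ⟨A, hA, ⟨_, hA₀, x₀, rfl⟩, hAε⟩ := exists_isOpen_inter_forall_dist_le
    (isCompact_range hΦ) (by rintro _ ⟨x, rfl⟩; exact hf.comp (hleft x)) (range_nonempty Φ)
    (half_pos hε)
  have hnear : ∀ᶠ x in 𝓝 a, Φ (x * (a⁻¹ * x₀)) ∈ A :=
    (hΦ.comp (hright _)).continuousAt.preimage_mem_nhds (by simpa using hA.mem_nhds hA₀)
  filter_upwards [hnear] with x hx y
  have := hAε _ ⟨hA₀, mem_range_self _⟩ _ ⟨hx, mem_range_self _⟩ (x₀⁻¹ * a * y)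
  simp only [Φ, mul_assoc, mul_inv_cancel_left, inv_mul_cancel_left] at this ⊢
  linarith

/-- **Ellis' theorem.** A group with a compact Hausdorff topology in which
multiplication is separately continuous is a topological group: multiplication is
jointly continuous and inversion is continuous. -/
theorem ellis_theorem
    {G : Type*} [Group G] [TopologicalSpace G] [CompactSpace G] [T2Space G]
    (hleft : ∀ a : G, Continuous fun x : G => a * x)
    (hright : ∀ a : G, Continuous fun x : G => x * a) :
    Continuous (fun p : G × G => p.1 * p.2) ∧ Continuous (fun x : G => x⁻¹) := by
  have hmul : Continuous fun p : G × G => p.1 * p.2 :=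
    continuous_of_forall_continuous_comp fun f hf =>
      continuous_uncurry_of_tendstoUniformly (fun x => hf.comp (hleft x))
        (tendstoUniformly_comp_mul_nhds hleft hright hf)
  refine ⟨hmul, continuous_of_isClosed_graph ?_⟩
  simpa only [inv_eq_iff_mul_eq_one] using isClosed_eq hmul continuous_const
end
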